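/- Let 1 ≤ k ≤ n be integers, let m = k(n-1) - k(k-1)/2, and let α_1, …, α_m ∈ (ℤ/2)^k be sign patterns. Suppose there exists a continuous nowhere-zero map f : V_{n,k} → ℝ^m which is equivariant in the sense that replacing x_j by -x_j multiplies the i-th coordinate f_i(x_1, …, x_k) by (-1)^{⟨α_i, ε_j⟩} for all i, j. Then there exists a continuous nowhere-zero map F : (S^{n-1})^k → ℝ^m × ℝ^{k(k-1)/2} which is equivariant in the sense that replacing x_j by -x_j multiplies the i-th coordinate of the first factor by (-1)^{⟨α_i, ε_j⟩} for each i ∈ {1, …, m}, and multiplies the coordinate of the second factor indexed by a pair 1 ≤ p < q ≤ k by -1 exactly when j ∈ {p, q} and leaves it unchanged otherwise. -/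

import Mathlib

/-- The Stiefel manifold predicate: `x` is a `k`-tuple of pairwise orthogonal
unit vectors in `ℝⁿ`. -/
def IsStiefelFrame (n k : ℕ) (x : Fin k → EuclideanSpace ℝ (Fin n)) : Prop :=
  (∀ j, ‖x j‖ = 1) ∧ ∀ i j, i ≠ j → inner ℝ (x i) (x j) = (0 : ℝ)

/-- Negating the `j`-th vector of the tuple `x`. -/
def negAt {n k : ℕ} (j : Fin k) (x : Fin k → EuclideanSpace ℝ (Fin n)) :
    Fin k → EuclideanSpace ℝ (Fin n) :=
  Function.update x j (-(x j))

/-!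
Model `(ℤ/2)^k` as the group `Fin k → ℤˣ` of sign changes of the `k` vectors. Extend `f` by
Tietze to a continuous `g` on all `k`-tuples of vectors and average `g` over the group, weighting
the `i`-th coordinate by the inverse of the sign character `α i`. The average is equivariant
everywhere, and on a frame it equals `2^k • f`, so it is nonzero there. Pairing it with the
inner products `⟨x_p, x_q⟩`, which vanish only on frames, gives `F`.
-/

open scoped RealInnerProductSpace

section Averaging

variable {Γ X ι R : Type*} [Group Γ] [Fintype Γ] [MulAction Γ X] [CommRing R]

def signedAverage (χ : ι → Γ →* R) (g : X → ι → R) (x : X) (i : ι) : R :=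
  ∑ γ, χ i γ⁻¹ * g (γ • x) i

theorem signedAverage_smul (χ : ι → Γ →* R) (g : X → ι → R) (δ : Γ) (x : X) (i : ι) :
    signedAverage χ g (δ • x) i = χ i δ * signedAverage χ g x i := by
  rw [signedAverage, signedAverage, Finset.mul_sum]
  refine Fintype.sum_equiv (Equiv.mulRight δ) _ _ fun γ => ?_
  rw [Equiv.coe_mulRight, mul_smul, mul_inv_rev, ← mul_assoc, ← map_mul,
    mul_inv_cancel_left]

theorem signedAverage_eq_card_mul {χ : ι → Γ →* R} {g : X → ι → R} {x : X} {i : ι}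
    (hg : ∀ γ : Γ, g (γ • x) i = χ i γ * g x i) :
    signedAverage χ g x i = Fintype.card Γ * g x i := by
  simp [signedAverage, hg, ← mul_assoc, ← map_mul]

theorem Continuous.signedAverage [TopologicalSpace X] [ContinuousConstSMul Γ X]
    [TopologicalSpace R] [ContinuousAdd R] [ContinuousMul R]
    (χ : ι → Γ →* R) {g : X → ι → R} (hg : Continuous g) :
    Continuous (signedAverage χ g) :=
  continuous_pi fun i => continuous_finsetSum _ fun γ _ =>
    continuous_const.mul ((continuous_apply i).comp (hg.comp (continuous_const_smul γ)))

end Averaging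

def signChar {κ R : Type*} [Fintype κ] [CommRing R] (a : κ → ℕ) : (κ → ℤˣ) →* R where
  toFun σ := ((∏ j, σ j ^ a j : ℤˣ) : ℤ)
  map_one' := by simp
  map_mul' σ τ := by simp [Finset.prod_mul_distrib, mul_pow]

theorem signChar_mulSingle_neg_one {κ R : Type*} [Fintype κ] [DecidableEq κ] [CommRing R]
    (a : κ → ℕ) (j : κ) : signChar (R := R) a (Pi.mulSingle j (-1)) = (-1) ^ a j := by
  simp [signChar, Pi.mulSingle_apply, apply_ite, ite_pow]

section Stiefel

variable {n k : ℕ}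

theorem negAt_eq_mulSingle_smul (j : Fin k) (x : Fin k → EuclideanSpace ℝ (Fin n)) :
    negAt j x = (Pi.mulSingle j (-1) : Fin k → ℤˣ) • x := by
  ext1 j'
  rcases eq_or_ne j' j with rfl | h
  · simp [negAt]
  · simp [negAt, h]

theorem IsStiefelFrame.units_smul {x : Fin k → EuclideanSpace ℝ (Fin n)}
    (hx : IsStiefelFrame n k x) (σ : Fin k → ℤˣ) : IsStiefelFrame n k (σ • x) := by
  refine ⟨fun j => ?_, fun i j hij => ?_⟩
  · rcases Int.units_eq_one_or (σ j) with h | h <;> simp [h, hx.1 j]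
  · rcases Int.units_eq_one_or (σ i) with h | h <;>
      rcases Int.units_eq_one_or (σ j) with h' | h' <;> simp [h, h', hx.2 i j hij]

theorem isClosed_setOf_isStiefelFrame (n k : ℕ) :
    IsClosed {x : Fin k → EuclideanSpace ℝ (Fin n) | IsStiefelFrame n k x} := by
  simp only [IsStiefelFrame, Set.ofPred_and, Set.ofPred_forall]
  refine .inter (isClosed_iInter fun j => isClosed_eq (by fun_prop) continuous_const)
    (isClosed_iInter fun i => isClosed_iInter fun j => isClosed_iInter fun _ =>
      isClosed_eq (by fun_prop) continuous_const)

theorem isStiefelFrame_of_inner_eq_zero {x : Fin k → EuclideanSpace ℝ (Fin n)}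
    (hnorm : ∀ j, ‖x j‖ = 1)
    (hinner : ∀ p : {p : Fin k × Fin k // p.1 < p.2}, ⟪x p.1.1, x p.1.2⟫ = 0) :
    IsStiefelFrame n k x := by
  refine ⟨hnorm, fun i j hij => ?_⟩
  rcases hij.lt_or_gt with h | h
  · exact hinner ⟨(i, j), h⟩
  · rw [real_inner_comm]; exact hinner ⟨(j, i), h⟩

theorem inner_negAt (x : Fin k → EuclideanSpace ℝ (Fin n)) (j : Fin k) {a b : Fin k}
    (hab : a ≠ b) :
    ⟪negAt j x a, negAt j x b⟫ = if j = a ∨ j = b then -⟪x a, x b⟫ else ⟪x a, x b⟫ := by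
  rcases eq_or_ne j a with rfl | ha
  · simp [negAt, hab.symm]
  rcases eq_or_ne j b with rfl | hb
  · simp [negAt, hab]
  · simp [negAt, ha, hb, ha.symm, hb.symm]

theorem IsStiefelFrame.apply_units_smul {ι : Type*} {a : ι → Fin k → ℕ}
    {f : {x : Fin k → EuclideanSpace ℝ (Fin n) // IsStiefelFrame n k x} → EuclideanSpace ℝ ι}
    (hf : ∀ (x : {x // IsStiefelFrame n k x}) j (hx : IsStiefelFrame n k (negAt j x.1)) i,
      f ⟨negAt j x.1, hx⟩ i = (-1 : ℝ) ^ a i j * f x i)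
    (σ : Fin k → ℤˣ) {x : Fin k → EuclideanSpace ℝ (Fin n)} (hx : IsStiefelFrame n k x)
    (i : ι) :
    f ⟨σ • x, hx.units_smul σ⟩ i = signChar (a i) σ * f ⟨x, hx⟩ i := by
  let H : Submonoid (Fin k → ℤˣ) :=
    { carrier := {σ | ∀ x (hx : IsStiefelFrame n k x) i,
        f ⟨σ • x, hx.units_smul σ⟩ i = signChar (a i) σ * f ⟨x, hx⟩ i}
      one_mem' := by simp
      mul_mem' := fun {σ τ} hσ hτ x hx i => by
        have : (⟨(σ * τ) • x, hx.units_smul _⟩ : {x // IsStiefelFrame n k x}) =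
            ⟨σ • τ • x, (hx.units_smul τ).units_smul σ⟩ := Subtype.ext (mul_smul σ τ x)
        rw [this, hσ _ (hx.units_smul τ), hτ _ hx, map_mul, mul_assoc] }
  refine Submonoid.pi_mem_of_mulSingle_mem (H := H) σ (fun j => ?_) x hx i
  intro x hx i
  rcases Int.units_eq_one_or (σ j) with h | h
  · simp [h]
  · simp only [h, ← negAt_eq_mulSingle_smul, signChar_mulSingle_neg_one]
    exact hf ⟨x, hx⟩ j _ i

end Stiefel

theorem stmt_10_general (n k : ℕ)
    (m : ℕ)
    (α : Fin m → Fin k → ZMod 2)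
    (hex : ∃ f : {x : Fin k → EuclideanSpace ℝ (Fin n) // IsStiefelFrame n k x} →
        EuclideanSpace ℝ (Fin m),
      Continuous f ∧ (∀ x, f x ≠ 0) ∧
      ∀ (x : {x : Fin k → EuclideanSpace ℝ (Fin n) // IsStiefelFrame n k x})
        (j : Fin k) (hx : IsStiefelFrame n k (negAt j x.1)) (i : Fin m),
        f ⟨negAt j x.1, hx⟩ i = (-1 : ℝ) ^ (α i j).val * f x i) :
    ∃ F : {x : Fin k → EuclideanSpace ℝ (Fin n) // ∀ j, ‖x j‖ = 1} →
        EuclideanSpace ℝ (Fin m) × ({p : Fin k × Fin k // p.1 < p.2} → ℝ),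
      Continuous F ∧ (∀ x, F x ≠ 0) ∧
      ∀ (x : {x : Fin k → EuclideanSpace ℝ (Fin n) // ∀ j, ‖x j‖ = 1})
        (j : Fin k) (hx : ∀ j', ‖negAt j x.1 j'‖ = 1),
        (∀ i : Fin m,
          (F ⟨negAt j x.1, hx⟩).1 i = (-1 : ℝ) ^ (α i j).val * (F x).1 i) ∧
        ∀ p : {p : Fin k × Fin k // p.1 < p.2},
          (F ⟨negAt j x.1, hx⟩).2 p =
            if j = p.1.1 ∨ j = p.1.2 then -((F x).2 p) else (F x).2 p := by
  obtain ⟨f, hf_cont, hf_ne, hf_neg⟩ := hex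
  obtain ⟨g, hg⟩ := ContinuousMap.exists_restrict_eq (isClosed_setOf_isStiefelFrame n k)
    ⟨f, hf_cont⟩
  have hgf {x} (hx : IsStiefelFrame n k x) : g x = f ⟨x, hx⟩ := DFunLike.congr_fun hg ⟨x, hx⟩
  let χ i : (Fin k → ℤˣ) →* ℝ := signChar fun j => (α i j).val
  let G := signedAverage χ fun x i => g x i
  refine ⟨fun x => (WithLp.toLp 2 (G x.1), fun p => ⟪x.1 p.1.1, x.1 p.1.2⟫), ?_, ?_, ?_⟩
  · have hG : Continuous G :=
      ((PiLp.continuous_ofLp 2 _).comp g.continuous).signedAverage χ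
    exact .prodMk ((PiLp.continuous_toLp 2 _).comp (hG.comp continuous_subtype_val))
      (continuous_pi fun p => .inner ((continuous_apply _).comp continuous_subtype_val)
        ((continuous_apply _).comp continuous_subtype_val))
  · rintro ⟨x, hx⟩ hF
    have hframe := isStiefelFrame_of_inner_eq_zero hx (congrFun (congrArg Prod.snd hF))
    refine hf_ne ⟨x, hframe⟩ (PiLp.ext fun i => ?_)
    have hG : G x i = Fintype.card (Fin k → ℤˣ) * f ⟨x, hframe⟩ i := by
      rw [← hgf hframe]
      refine signedAverage_eq_card_mul fun σ => ?_
      rw [hgf (hframe.units_smul σ), hgf hframe, hframe.apply_units_smul hf_neg]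
    have : G x i = 0 := congrArg (·.ofLp i) (congrArg Prod.fst hF)
    simpa [hG, Fintype.card_ne_zero] using this
  · intro x j hx
    refine ⟨fun i => ?_, fun p => inner_negAt x.1 j p.2.ne⟩
    simp only [negAt_eq_mulSingle_smul, G, signedAverage_smul, χ, signChar_mulSingle_neg_one]

/-- If there is a continuous nowhere-zero `(ℤ/2)^k`-equivariant (with respect
to sign patterns `α_1, …, α_m`, `m = k(n-1) - k(k-1)/2`) map
`f : V_{n,k} → ℝ^m`, then there is a continuous nowhere-zero equivariant map
`F : (S^{n-1})^k → ℝ^m × ℝ^{k(k-1)/2}`, where the coordinate of the second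
factor indexed by a pair `p < q` is negated by negating `x_j` exactly when
`j ∈ {p, q}`. -/
theorem stmt_10 (n k : ℕ) (hk : 1 ≤ k) (hkn : k ≤ n)
    (m : ℕ) (hm : m = k * (n - 1) - k * (k - 1) / 2)
    (α : Fin m → Fin k → ZMod 2)
    (hex : ∃ f : {x : Fin k → EuclideanSpace ℝ (Fin n) // IsStiefelFrame n k x} →
        EuclideanSpace ℝ (Fin m),
      Continuous f ∧ (∀ x, f x ≠ 0) ∧
      ∀ (x : {x : Fin k → EuclideanSpace ℝ (Fin n) // IsStiefelFrame n k x})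
        (j : Fin k) (hx : IsStiefelFrame n k (negAt j x.1)) (i : Fin m),
        f ⟨negAt j x.1, hx⟩ i = (-1 : ℝ) ^ (α i j).val * f x i) :
    ∃ F : {x : Fin k → EuclideanSpace ℝ (Fin n) // ∀ j, ‖x j‖ = 1} →
        EuclideanSpace ℝ (Fin m) × ({p : Fin k × Fin k // p.1 < p.2} → ℝ),
      Continuous F ∧ (∀ x, F x ≠ 0) ∧
      ∀ (x : {x : Fin k → EuclideanSpace ℝ (Fin n) // ∀ j, ‖x j‖ = 1})
        (j : Fin k) (hx : ∀ j', ‖negAt j x.1 j'‖ = 1),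
        (∀ i : Fin m,
          (F ⟨negAt j x.1, hx⟩).1 i = (-1 : ℝ) ^ (α i j).val * (F x).1 i) ∧
        ∀ p : {p : Fin k × Fin k // p.1 < p.2},
          (F ⟨negAt j x.1, hx⟩).2 p =
            if j = p.1.1 ∨ j = p.1.2 then -((F x).2 p) else (F x).2 p :=
  stmt_10_general n k m α hex
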